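/- arXiv:1202.3041 — 2 statements merged into one kernel-verified Lean document; each statement's English description precedes it below -/
import Mathlib

section
/- The function z ↦ |sin(z)/z|^p is integrable on ℝ for every p > 1, but not integrable for p = 1. -/
/-! For `p > 1`, integrability comes from the bound `|sin x / x| ≤ 2 / (1 + |x|)`, whose `p`-th
power is integrable on `ℝ`. For `p = 1`, the integral of `|sin x / x|` over `[nπ, (n + 1)π]` is at
least `2 / ((n + 1)π)`; these pieces would be summable if the function were integrable, but they
dominate a multiple of the harmonic series. -/

open MeasureTheory Real Set Filter

lemma abs_sin_div_le_two_div_one_add_abs (x : ℝ) : |sin x / x| ≤ 2 / (1 + |x|) := by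
  rcases eq_or_ne x 0 with rfl | hx
  · norm_num
  rw [abs_div, div_le_div_iff₀ (abs_pos.mpr hx) (by positivity)]
  nlinarith [abs_sin_le_abs (x := x), abs_sin_le_one x, abs_nonneg (sin x)]

lemma integrable_rpow_of_le_div_one_add_abs {f : ℝ → ℝ} (hf : Measurable f)
    (hf0 : ∀ x, 0 ≤ f x) {C p : ℝ} (hfC : ∀ x, f x ≤ C / (1 + |x|)) (hp : 1 < p) :
    Integrable (fun x => f x ^ p) := by
  have hC : 0 ≤ C := by simpa using (hf0 0).trans (hfC 0)
  refine Integrable.mono' ((integrable_one_add_norm (E := ℝ) (μ := volume) (r := p)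
    (by simpa using hp)).const_mul (C ^ p)) (hf.pow_const p).aestronglyMeasurable ?_
  refine Eventually.of_forall fun x => ?_
  calc ‖f x ^ p‖ = f x ^ p := norm_of_nonneg (rpow_nonneg (hf0 x) p)
    _ ≤ (C / (1 + |x|)) ^ p := rpow_le_rpow (hf0 x) (hfC x) (by linarith)
    _ = C ^ p * (1 + ‖x‖) ^ (-p) := by
      rw [div_rpow hC (by positivity), rpow_neg (by positivity), norm_eq_abs, div_eq_mul_inv]

theorem MeasureTheory.Integrable.summable_intervalIntegral {E : Type*} [NormedAddCommGroup E]
    [NormedSpace ℝ E] {μ : Measure ℝ} {f : ℝ → E} (hf : Integrable f μ) {a : ℕ → ℝ}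
    (ha : Monotone a) : Summable (fun n => ∫ x in a n..a (n + 1), f x ∂μ) := by
  simp_rw [intervalIntegral.integral_of_le (ha (Nat.le_succ _))]
  have hdisj := ha.pairwise_disjoint_on_Ioc_succ
  simp only [Order.succ_eq_add_one] at hdisj
  exact (hasSum_integral_iUnion (fun _ => measurableSet_Ioc) hdisj hf.integrableOn).summable

lemma integral_abs_sin_add_pi (a : ℝ) : ∫ x in a..a + π, |sin x| = 2 := by
  have hper : Function.Periodic (fun x => |sin x|) π := fun x => by simp [sin_add_pi]
  rw [hper.intervalIntegral_add_eq a 0, zero_add,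
    intervalIntegral.integral_congr (g := sin) fun x hx => ?_, integral_sin]
  · norm_num
  rw [uIcc_of_le pi_pos.le] at hx
  exact abs_of_nonneg (sin_nonneg_of_nonneg_of_le_pi hx.1 hx.2)

lemma intervalIntegrable_abs_sin_div (a b : ℝ) :
    IntervalIntegrable (fun x => |sin x / x|) volume a b := by
  have hcont : Continuous fun x : ℝ => 2 / (1 + |x|) :=
    continuous_const.div (by fun_prop) fun x => by positivity
  have hmeas : Measurable fun x : ℝ => |sin x / x| := by fun_prop
  refine (hcont.intervalIntegrable a b).mono_fun' hmeas.aestronglyMeasurable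
    (Eventually.of_forall fun x => ?_)
  simp only [norm_eq_abs, abs_abs]
  exact abs_sin_div_le_two_div_one_add_abs x

lemma two_div_add_pi_le_integral_abs_sin_div {a : ℝ} (ha : 0 ≤ a) :
    2 / (a + π) ≤ ∫ x in a..a + π, |sin x / x| := by
  calc 2 / (a + π) = ∫ x in a..a + π, |sin x| / (a + π) := by
        rw [intervalIntegral.integral_div, integral_abs_sin_add_pi]
    _ ≤ ∫ x in a..a + π, |sin x / x| := by
      refine intervalIntegral.integral_mono_on (by linarith [pi_pos])
        (Continuous.intervalIntegrable (by fun_prop) _ _) (intervalIntegrable_abs_sin_div _ _) ?_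
      intro x ⟨hax, hxa⟩
      rcases eq_or_lt_of_le (ha.trans hax) with rfl | hx
      · simp
      rw [abs_div, abs_of_pos hx]
      exact div_le_div_of_nonneg_left (abs_nonneg _) hx hxa

lemma not_integrable_abs_sin_div : ¬ Integrable (fun x : ℝ => |sin x / x|) := by
  intro hf
  have hmono : Monotone fun n : ℕ => n * π := fun _ _ h =>
    mul_le_mul_of_nonneg_right (Nat.cast_le.mpr h) pi_pos.le
  have hsum : Summable (fun n : ℕ => 2 / (n * π + π)) := by
    refine (hf.summable_intervalIntegral hmono).of_nonneg_of_le (fun n => by positivity) fun n => ?_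
    have := two_div_add_pi_le_integral_abs_sin_div (a := n * π) (by positivity)
    push_cast
    rwa [add_mul, one_mul]
  refine not_summable_one_div_natCast ((summable_nat_add_iff 1).mp ?_)
  refine (hsum.mul_left (π / 2)).congr fun n => ?_
  push_cast
  field_simp

/-- `z ↦ |sin z / z|^p` is integrable on `ℝ` for every `p > 1`,
but not integrable for `p = 1`. -/
theorem sinc_pow_integrable_iff :
    (∀ p : ℝ, 1 < p → Integrable (fun z : ℝ => |Real.sin z / z| ^ p)) ∧
    ¬ Integrable (fun z : ℝ => |Real.sin z / z|) :=
  ⟨fun _ hp => integrable_rpow_of_le_div_one_add_abs (by fun_prop) (fun _ => abs_nonneg _)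
    abs_sin_div_le_two_div_one_add_abs hp, not_integrable_abs_sin_div⟩
end

section
/- Let k ≥ 3, d ≥ 1. If z_1 = ... = z_k = 1/p₁ and z_{k+1} = 1/p_{k+1} satisfy the scaling condition d(z_1 + ... + z_k) + d(k−1)z_{k+1} = d(k−1), then for every linear subspace V ⊆ ℝ^{d(k−1)}, dim V ≤ Σ_{j=1}^{k+1} z_j dim(l_j(V)), where l_j(x) = x_j for j = 1,...,k−1, l_k(x) = Σ_{j=1}^{k−1} x_j (each mapping to ℝ^d), and l_{k+1} is the identity on ℝ^{d(k−1)}. -/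
open Module

lemma rank_nullity_sub {N M : Type*} [AddCommGroup N] [Module ℝ N] [FiniteDimensional ℝ N]
    [AddCommGroup M] [Module ℝ M] [FiniteDimensional ℝ M]
    (f : N →ₗ[ℝ] M) (V : Submodule ℝ N) :
    finrank ℝ V = finrank ℝ (V.map f) + finrank ℝ (V ⊓ LinearMap.ker f : Submodule ℝ N) := by
  have h := (f.domRestrict V).finrank_range_add_finrank_ker
  rw [LinearMap.range_domRestrict] at h
  rw [LinearMap.ker_domRestrict] at h
  rw [← Submodule.finrank_map_subtype_eq V (Submodule.comap V.subtype (LinearMap.ker f)),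
    Submodule.map_comap_subtype] at h
  omega

lemma finrank_le_sum_finrank_map {N : Type*} [AddCommGroup N] [Module ℝ N] [FiniteDimensional ℝ N]
    {ι : Type*} [DecidableEq ι] {M : ι → Type*} [∀ i, AddCommGroup (M i)] [∀ i, Module ℝ (M i)]
    [∀ i, FiniteDimensional ℝ (M i)]
    (f : ∀ i, N →ₗ[ℝ] M i) (s : Finset ι) (V : Submodule ℝ N)
    (h : ∀ x ∈ V, (∀ i ∈ s, f i x = 0) → x = 0) :
    finrank ℝ V ≤ ∑ i ∈ s, finrank ℝ (V.map (f i)) := by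
  induction s using Finset.induction generalizing V with
  | empty =>
    have hV : V = ⊥ := by
      ext x; simp only [Submodule.mem_bot]
      constructor
      · intro hx; exact h x hx (by simp)
      · rintro rfl; exact V.zero_mem
    simp [hV]
  | @insert a t hat ih =>
    rw [Finset.sum_insert hat]
    have key := rank_nullity_sub (f a) V
    have h2 : finrank ℝ (V ⊓ LinearMap.ker (f a) : Submodule ℝ N)
        ≤ ∑ i ∈ t, finrank ℝ ((V ⊓ LinearMap.ker (f a) : Submodule ℝ N).map (f i)) := by
      apply ih
      intro x hx hall
      refine h x hx.1 ?_
      intro i hi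
      rcases Finset.mem_insert.mp hi with rfl | hi
      · exact hx.2
      · exact hall i hi
    have h3 : ∀ i ∈ t, finrank ℝ ((V ⊓ LinearMap.ker (f a) : Submodule ℝ N).map (f i))
        ≤ finrank ℝ (V.map (f i)) := fun i _ =>
      Submodule.finrank_mono (Submodule.map_mono inf_le_left)
    calc finrank ℝ V = finrank ℝ (V.map (f a)) + finrank ℝ (V ⊓ LinearMap.ker (f a) : Submodule ℝ N) := key
    _ ≤ finrank ℝ (V.map (f a)) + ∑ i ∈ t, finrank ℝ (V.map (f i)) := by
        exact Nat.add_le_add_left (h2.trans (Finset.sum_le_sum h3)) _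

set_option maxHeartbeats 1000000 in
/-- Verification of condition (C2) of the Hölder-Young-Brascamp-Lieb inequality
for the coordinate projections `l_j(x) = x_j`, the sum `l_k(x) = Σ x_j`
and the identity `l_{k+1}` on `ℝ^{d(k−1)}`, under the scaling condition
`d(z_1+...+z_k) + d(k−1)z_{k+1} = d(k−1)` with `z_1 = ... = z_k`. -/
theorem HYBL_dimension_condition (d k : ℕ) (hk : 3 ≤ k) (hd : 1 ≤ d)
    (a b : ℝ) (ha : a ∈ Set.Icc (0:ℝ) 1) (hb : b ∈ Set.Icc (0:ℝ) 1)
    (hbal : (d : ℝ) * (k * a) + (d : ℝ) * ((k : ℝ) - 1) * b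
      = (d : ℝ) * ((k : ℝ) - 1))
    (V : Submodule ℝ (Fin (k - 1) → Fin d → ℝ)) :
    (finrank ℝ V : ℝ)
      ≤ a * ((∑ j : Fin (k - 1),
            (finrank ℝ (V.map (LinearMap.proj j : (Fin (k - 1) → Fin d → ℝ) →ₗ[ℝ] (Fin d → ℝ))) : ℝ))
          + (finrank ℝ (V.map (∑ j : Fin (k - 1),
              (LinearMap.proj j : (Fin (k - 1) → Fin d → ℝ) →ₗ[ℝ] (Fin d → ℝ)))) : ℝ))
        + b * (finrank ℝ V : ℝ) := by
  set p : Fin (k - 1) → (Fin (k - 1) → Fin d → ℝ) →ₗ[ℝ] (Fin d → ℝ) :=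
    fun j => LinearMap.proj j with hp
  set Sp : (Fin (k - 1) → Fin d → ℝ) →ₗ[ℝ] (Fin d → ℝ) := ∑ j : Fin (k - 1), p j with hSp
  set n := finrank ℝ V with hn
  set m : Fin (k - 1) → ℕ := fun j => finrank ℝ (V.map (p j)) with hm
  set ms := finrank ℝ (V.map Sp) with hms
  set M := ∑ j : Fin (k - 1), m j with hM
  -- Fact 1 : n ≤ M
  have fact1 : n ≤ M := by
    apply finrank_le_sum_finrank_map p Finset.univ V
    intro x _ hall
    funext i
    exact hall i (Finset.mem_univ i)
  -- Fact 2 : ∀ j, n + m j ≤ ms + M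
  have fact2 : ∀ j : Fin (k - 1), n + m j ≤ ms + M := by
    intro j
    have key := rank_nullity_sub Sp V
    set W : Submodule ℝ (Fin (k - 1) → Fin d → ℝ) := V ⊓ LinearMap.ker Sp with hW
    have hW2 : finrank ℝ W ≤ ∑ i ∈ Finset.univ.erase j, finrank ℝ (W.map (p i)) := by
      apply finrank_le_sum_finrank_map p (Finset.univ.erase j) W
      intro x hx hall
      have hsum : ∑ i : Fin (k - 1), x i = 0 := by
        have := hx.2
        simpa [Sp, LinearMap.sum_apply, hp] using this
      have hj : x j = 0 := by
        rw [← Finset.add_sum_erase _ _ (Finset.mem_univ j)] at hsum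
        have : ∑ i ∈ Finset.univ.erase j, x i = 0 :=
          Finset.sum_eq_zero fun i hi => hall i hi
        rw [this, add_zero] at hsum
        exact hsum
      funext i
      by_cases hij : i = j
      · rw [hij]; exact hj
      · exact hall i (Finset.mem_erase.mpr ⟨hij, Finset.mem_univ i⟩)
    have hW3 : ∀ i ∈ Finset.univ.erase j, finrank ℝ (W.map (p i)) ≤ m i := fun i _ =>
      Submodule.finrank_mono (Submodule.map_mono inf_le_left)
    have hW4 : finrank ℝ W ≤ ∑ i ∈ Finset.univ.erase j, m i :=
      hW2.trans (Finset.sum_le_sum hW3)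
    have hMerase : ∑ i ∈ Finset.univ.erase j, m i + m j = M := by
      rw [hM, Finset.sum_erase_add _ _ (Finset.mem_univ j)]
    omega
  -- combine : k * n ≤ (k - 1) * ms + (k - 1) * M
  have fact3 : k * n ≤ (k - 1) * ms + (k - 1) * M := by
    have hsum : ∑ j : Fin (k - 1), (n + m j) ≤ ∑ _j : Fin (k - 1), (ms + M) :=
      Finset.sum_le_sum fun j _ => fact2 j
    simp only [Finset.sum_add_distrib, Finset.sum_const, Finset.card_univ, Fintype.card_fin,
      smul_eq_mul, Nat.mul_add, ← hM] at hsum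
    have hkn : k * n = (k - 1) * n + n := by
      have h1 : 1 ≤ k := by omega
      calc k * n = (k - 1 + 1) * n := by rw [Nat.sub_add_cancel h1]
        _ = (k - 1) * n + n := by ring
    calc k * n = (k - 1) * n + n := hkn
      _ ≤ (k - 1) * n + M := Nat.add_le_add_left fact1 _
      _ ≤ (k - 1) * ms + (k - 1) * M := hsum
  -- now real arithmetic
  have hd0 : (0:ℝ) < d := by exact_mod_cast hd
  have hk3 : (3:ℝ) ≤ (k:ℝ) := by exact_mod_cast hk
  have hbal' : (k:ℝ) * a + ((k:ℝ) - 1) * b = (k:ℝ) - 1 := by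
    have h := hbal
    nlinarith [h, hd0]
  have hfact3R : (k:ℝ) * (n:ℝ) ≤ ((k:ℝ) - 1) * ((ms:ℝ) + (M:ℝ)) := by
    have h := fact3
    have hk1 : (1:ℕ) ≤ k := by omega
    have h2 : ((k * n : ℕ) : ℝ) ≤ (((k-1) * ms + (k-1) * M : ℕ) : ℝ) := by exact_mod_cast h
    push_cast [Nat.cast_sub hk1] at h2
    linarith
  have hb1 : b ≤ 1 := hb.2
  have hk0 : (0:ℝ) < k := by linarith
  have ha' : a = ((k:ℝ) - 1) * (1 - b) / k := by
    field_simp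
    linarith [hbal']
  have key : (n:ℝ) * (1 - b) ≤ a * ((M:ℝ) + (ms:ℝ)) := by
    rw [ha', div_mul_eq_mul_div, le_div_iff₀ hk0]
    have h0 : (0:ℝ) ≤ 1 - b := by linarith
    calc (n:ℝ) * (1 - b) * k = (1 - b) * ((k:ℝ) * n) := by ring
      _ ≤ (1 - b) * (((k:ℝ) - 1) * ((ms:ℝ) + (M:ℝ))) :=
          mul_le_mul_of_nonneg_left hfact3R h0
      _ = ((k:ℝ) - 1) * (1 - b) * ((M:ℝ) + (ms:ℝ)) := by ring
  have hgoal : (n:ℝ) ≤ a * ((M:ℝ) + (ms:ℝ)) + b * (n:ℝ) := by linarith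
  have hMr : (M:ℝ) = ∑ j : Fin (k-1), (m j : ℝ) := by rw [hM]; push_cast; ring
  calc (n:ℝ) ≤ a * ((M:ℝ) + (ms:ℝ)) + b * (n:ℝ) := hgoal
    _ = a * ((∑ j : Fin (k-1), (m j : ℝ)) + (ms:ℝ)) + b * (n:ℝ) := by rw [hMr]
end
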